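/- arXiv:1507.06041 — 3 statements merged into one kernel-verified Lean document; each statement's English description precedes it below -/
import Mathlib

section
/- Let M > 0, L > 0 and Δt > 0 be real numbers. Then every complex root A of the quadratic A² − 2(1 − Δt²·L/(2M))·A + 1 = 0 satisfies |A| ≤ 1 and the two roots are distinct if and only if Δt < 2·√(M/L). (This is the stability criterion for the AMP scheme applied to the model beam–fluid problem, with M = ρ̄h̄ + M̂a⁻ + M̂a⁺ the total effective mass and L the symbol of the beam operator.) -/
/-!
Writing `b = 1 - Δt²L/(2M)`, stability is the root condition for `A² - 2bA + 1`, which holds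
exactly when `|b| < 1`. Two distinct roots have product `1` (Vieta), so if both lie in the closed
unit disc they lie on the unit circle and are complex conjugates with real part `b`; they are
distinct only if they are not real, i.e. `|b| < 1`. Conversely, for `|b| < 1` the roots
`b ± i√(1 - b²)` are distinct and of modulus one. Since `Δt²L/(2M) > 0`, the condition `|b| < 1`
reduces to `Δt²L/(2M) < 2`, i.e. `Δt < 2√(M/L)`.
-/

open Complex ComplexConjugate

def IsRootStable (b : ℝ) : Prop :=
  (∀ A : ℂ, A ^ 2 - 2 * (b : ℂ) * A + 1 = 0 → ‖A‖ ≤ 1) ∧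
    ∃ A₁ A₂ : ℂ, A₁ ≠ A₂ ∧ A₁ ^ 2 - 2 * (b : ℂ) * A₁ + 1 = 0 ∧
      A₂ ^ 2 - 2 * (b : ℂ) * A₂ + 1 = 0

section Vieta

variable {R : Type*} [CommRing R] [NoZeroDivisors R] {c A₁ A₂ : R}

theorem add_eq_two_mul_of_roots (hne : A₁ ≠ A₂) (h₁ : A₁ ^ 2 - 2 * c * A₁ + 1 = 0)
    (h₂ : A₂ ^ 2 - 2 * c * A₂ + 1 = 0) : A₁ + A₂ = 2 * c := by
  have hfac : (A₁ - A₂) * (A₁ + A₂ - 2 * c) = 0 := by linear_combination h₁ - h₂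
  linear_combination (mul_eq_zero.1 hfac).resolve_left (sub_ne_zero.2 hne)

theorem mul_eq_one_of_roots (hne : A₁ ≠ A₂) (h₁ : A₁ ^ 2 - 2 * c * A₁ + 1 = 0)
    (h₂ : A₂ ^ 2 - 2 * c * A₂ + 1 = 0) : A₁ * A₂ = 1 := by
  linear_combination -h₁ + A₁ * add_eq_two_mul_of_roots hne h₁ h₂

end Vieta

theorem Complex.norm_eq_one_of_mul_eq_one_of_norm_le_one {z w : ℂ} (h : z * w = 1)
    (hz : ‖z‖ ≤ 1) (hw : ‖w‖ ≤ 1) : ‖z‖ = 1 := by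
  have hprod : ‖z‖ * ‖w‖ = 1 := by rw [← norm_mul, h, norm_one]
  nlinarith [norm_nonneg z, norm_nonneg w]

theorem Complex.eq_conj_of_mul_eq_one {z w : ℂ} (h : z * w = 1) (hz : ‖z‖ = 1) : w = conj z := by
  rw [eq_inv_of_mul_eq_one_right h, inv_eq_conj hz]

theorem abs_lt_one_of_isRootStable {b : ℝ} (hb : IsRootStable b) : |b| < 1 := by
  obtain ⟨hdisc, A₁, A₂, hne, h₁, h₂⟩ := hb
  have hmul := mul_eq_one_of_roots hne h₁ h₂
  have hnorm : ‖A₁‖ = 1 :=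
    norm_eq_one_of_mul_eq_one_of_norm_le_one hmul (hdisc A₁ h₁) (hdisc A₂ h₂)
  have hconj : A₂ = conj A₁ := eq_conj_of_mul_eq_one hmul hnorm
  have hre : A₁.re = b := by
    have hsum := add_eq_two_mul_of_roots hne h₁ h₂
    rw [hconj, add_conj] at hsum
    have hsum' : 2 * A₁.re = 2 * b := by exact_mod_cast hsum
    linarith
  have him : A₁.im ≠ 0 := fun him => hne (hconj.trans (conj_eq_iff_im.2 him)).symm
  rw [← hre, ← hnorm]
  exact abs_re_lt_norm.2 him

theorem isRootStable_of_abs_lt_one {b : ℝ} (hb : |b| < 1) : IsRootStable b := by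
  set s := √(1 - b ^ 2)
  have hb2 : b ^ 2 < 1 := (sq_lt_one_iff_abs_lt_one b).2 hb
  have hs : 0 < s := Real.sqrt_pos.2 (by linarith)
  have hs2 : s ^ 2 = 1 - b ^ 2 := Real.sq_sqrt (by linarith)
  have root {t : ℝ} (ht : t ^ 2 = s ^ 2) :
      (b + t * I) ^ 2 - 2 * (b : ℂ) * (b + t * I) + 1 = 0 := by
    have htC : (t : ℂ) ^ 2 = 1 - (b : ℂ) ^ 2 := by exact_mod_cast ht.trans hs2
    linear_combination (t : ℂ) ^ 2 * I_sq - htC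
  have norm_root {t : ℝ} (ht : t ^ 2 = s ^ 2) : ‖(b : ℂ) + t * I‖ = 1 := by
    rw [norm_def, normSq_add_mul_I, ht, hs2, add_sub_cancel, Real.sqrt_one]
  have hne : (b : ℂ) + s * I ≠ b + (-s : ℝ) * I := by
    intro h
    have := congrArg im h
    simp only [add_im, ofReal_im, mul_im, I_re, I_im, mul_zero, mul_one, ofReal_re,
      zero_add] at this
    linarith
  refine ⟨fun A hA => ?_, _, _, hne, root rfl, root (neg_sq s)⟩
  by_cases hA₁ : A = b + s * I
  · rw [hA₁, norm_root rfl]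
  · have hmul := mul_eq_one_of_roots hA₁ hA (root rfl)
    have hprod : ‖A‖ * ‖(b : ℂ) + s * I‖ = 1 := by rw [← norm_mul, hmul, norm_one]
    rw [norm_root rfl, mul_one] at hprod
    exact hprod.le

theorem isRootStable_iff_abs_lt_one (b : ℝ) : IsRootStable b ↔ |b| < 1 :=
  ⟨abs_lt_one_of_isRootStable, isRootStable_of_abs_lt_one⟩

theorem div_lt_two_iff_lt_two_mul_sqrt {M L Δt : ℝ} (hM : 0 < M) (hL : 0 < L) (hΔt : 0 < Δt) :
    Δt ^ 2 * L / (2 * M) < 2 ↔ Δt < 2 * √(M / L) := by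
  rw [← div_lt_iff₀' two_pos, Real.lt_sqrt (by positivity), lt_div_iff₀ hL,
    div_lt_iff₀ (by positivity)]
  constructor <;> intro h <;> linarith

/-- Stability criterion for the AMP scheme: every complex root `A` of
`A² − 2(1 − Δt²·L/(2M))·A + 1 = 0` satisfies `|A| ≤ 1` and the two roots are
distinct, if and only if `Δt < 2·√(M/L)`. -/
theorem amp_stability (M L Δt : ℝ) (hM : 0 < M) (hL : 0 < L) (hΔt : 0 < Δt) :
    ((∀ A : ℂ, A ^ 2 - 2 * ((1 - Δt ^ 2 * L / (2 * M) : ℝ) : ℂ) * A + 1 = 0 →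
        ‖A‖ ≤ 1) ∧
      ∃ A₁ A₂ : ℂ, A₁ ≠ A₂ ∧
        A₁ ^ 2 - 2 * ((1 - Δt ^ 2 * L / (2 * M) : ℝ) : ℂ) * A₁ + 1 = 0 ∧
        A₂ ^ 2 - 2 * ((1 - Δt ^ 2 * L / (2 * M) : ℝ) : ℂ) * A₂ + 1 = 0) ↔
    Δt < 2 * Real.sqrt (M / L) := by
  have hβ : 0 < Δt ^ 2 * L / (2 * M) := by positivity
  change IsRootStable _ ↔ _
  rw [isRootStable_iff_abs_lt_one, abs_sub_lt_iff, ← div_lt_two_iff_lt_two_mul_sqrt hM hL hΔt]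
  exact ⟨fun h => by linarith [h.2], fun h => ⟨by linarith, by linarith⟩⟩
end

section
/- Let m > 0, L > 0 and Mₐ ≥ m be real numbers. Then for every Δt > 0 the cubic polynomial P(A) = m·A·(A−1)² + Δt²·L·A² + Mₐ·(A−1)² fails the weak-stability condition: it has a complex root A with |A| > 1, or a repeated root of modulus one. (Hence the traditional partitioned scheme is unconditionally unstable when the total added mass is at least the beam mass.) -/
open Polynomial

/-- The amplification polynomial `P(A) = m·A·(A−1)² + Δt²·L·A² + Mₐ·(A−1)²`
of the traditional partitioned scheme, as a polynomial over `ℂ`. -/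
noncomputable def TPpoly (m L Ma Δt : ℝ) : Polynomial ℂ :=
  C (m : ℂ) * X * (X - 1) ^ 2 + C ((Δt ^ 2 * L : ℝ) : ℂ) * X ^ 2 +
    C (Ma : ℂ) * (X - 1) ^ 2

/-- The real restriction of `TPpoly`, with `c` standing for `Δt² L`. -/
def tpCubic (m c Ma x : ℝ) : ℝ :=
  m * x * (x - 1) ^ 2 + c * x ^ 2 + Ma * (x - 1) ^ 2

lemma TPpoly_eval_ofReal (m L Ma Δt x : ℝ) :
    (TPpoly m L Ma Δt).eval (x : ℂ) = (tpCubic m (Δt ^ 2 * L) Ma x : ℂ) := by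
  simp only [TPpoly, tpCubic, eval_add, eval_mul, eval_pow, eval_sub, eval_C, eval_X, eval_one]
  push_cast
  ring

lemma continuous_tpCubic (m c Ma : ℝ) : Continuous (tpCubic m c Ma) := by
  unfold tpCubic
  fun_prop

lemma tpCubic_neg_one (m c Ma : ℝ) : tpCubic m c Ma (-1) = c + 4 * (Ma - m) := by
  unfold tpCubic
  ring

/-- For `x ≤ 0` we have `x² ≤ (x - 1)²`, so the cubic is at most `(x - 1)² (m x + c + Ma)`. -/
lemma tpCubic_neg {m c Ma x : ℝ} (hc : 0 ≤ c) (hx : x ≤ 0) (hlin : m * x + c + Ma < 0) :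
    tpCubic m c Ma x < 0 := by
  have hsq : x ^ 2 ≤ (x - 1) ^ 2 := by nlinarith
  have hpos : 0 < (x - 1) ^ 2 := by nlinarith
  calc tpCubic m c Ma x ≤ (x - 1) ^ 2 * (m * x + c + Ma) := by
        unfold tpCubic
        nlinarith [mul_le_mul_of_nonneg_left hsq hc]
    _ < 0 := mul_neg_of_pos_of_neg hpos hlin

/-- The cubic tends to `-∞` at `-∞` and is positive at `-1`, so it vanishes below `-1`;
`b = -1 - (c + Ma) / m` is an explicit point where it is negative. -/
lemma exists_tpCubic_eq_zero_lt_neg_one {m c Ma : ℝ} (hm : 0 < m) (hc : 0 ≤ c)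
    (h : 0 < c + 4 * (Ma - m)) : ∃ r < -1, tpCubic m c Ma r = 0 := by
  set b := -1 - (c + Ma) / m
  have hmb : m * b = -m - (c + Ma) := by
    simp only [b]
    field_simp
  have hb : b < -1 := by
    have : 0 < (c + Ma) / m := div_pos (by linarith) hm
    linarith
  have hfb : tpCubic m c Ma b < 0 := tpCubic_neg hc (by linarith) (by linarith)
  have hf1 : 0 < tpCubic m c Ma (-1) := by rw [tpCubic_neg_one]; exact h
  obtain ⟨r, hr, hfr⟩ := intermediate_value_Ioo hb.le (continuous_tpCubic m c Ma).continuousOn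
    ⟨hfb, hf1⟩
  exact ⟨r, hr.2, hfr⟩

/-- If the total added mass is at least the beam mass (`Mₐ ≥ m`), then for every
time step `Δt > 0` the traditional partitioned scheme fails weak stability:
its amplification polynomial has a root of modulus `> 1`, or a repeated root of
modulus one. -/
theorem tp_unconditionally_unstable (m L Ma : ℝ) (hm : 0 < m) (hL : 0 < L)
    (hMa : m ≤ Ma) :
    ∀ Δt : ℝ, 0 < Δt →
      (∃ A : ℂ, (TPpoly m L Ma Δt).IsRoot A ∧ 1 < ‖A‖) ∨
      (∃ A : ℂ, ‖A‖ = 1 ∧ 2 ≤ (TPpoly m L Ma Δt).rootMultiplicity A) := by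
  intro Δt hΔt
  have hc : 0 < Δt ^ 2 * L := by positivity
  obtain ⟨r, hr, hroot⟩ := exists_tpCubic_eq_zero_lt_neg_one (Ma := Ma) hm hc.le (by linarith)
  refine Or.inl ⟨r, ?_, ?_⟩
  · simp [IsRoot, TPpoly_eval_ofReal, hroot]
  · rw [Complex.norm_real, Real.norm_eq_abs, abs_of_neg (by linarith)]
    linarith
end

section
/- Let m > 0, L > 0, Mₐ⁻ ≥ 0, Mₐ⁺ ≥ 0 and Δt > 0 be real numbers with Δt < 2·√(m/L). Then Δt < 2·√((m + Mₐ⁻ + Mₐ⁺)/L), and consequently every complex root A of the quadratic A² − 2(1 − Δt²·L/(2(m + Mₐ⁻ + Mₐ⁺)))·A + 1 = 0 satisfies |A| = 1 and the two roots are distinct. (Hence any time step that is stable for the leap-frog scheme for the beam alone is also stable for the AMP scheme.) -/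
/-!
Adding the fluid only increases the effective mass from `m` to `M = m + Mₐ⁻ + Mₐ⁺`, which
relaxes the time-step restriction `Δt < 2√(M/L)`. That restriction says exactly that the real
coefficient `b = 1 - Δt²L/(2M)` lies in `(-1, 1)`. The amplification polynomial is then
`A² - 2bA + 1 = (A - (b + s i))(A - (b - s i))` with `s = √(1 - b²) > 0`, so its roots are two
distinct complex conjugates on the unit circle.
-/

open Complex

lemma sq_sub_two_mul_add_one_eq_mul {b s : ℝ} (h : b ^ 2 + s ^ 2 = 1) (A : ℂ) :
    A ^ 2 - 2 * (b : ℂ) * A + 1 = (A - (b + s * I)) * (A - (b - s * I)) := by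
  have hC : (b : ℂ) ^ 2 + (s : ℂ) ^ 2 = 1 := by exact_mod_cast h
  linear_combination (s : ℂ) ^ 2 * I_sq - hC

lemma norm_add_mul_I_eq_one {b s : ℝ} (h : b ^ 2 + s ^ 2 = 1) : ‖(b : ℂ) + s * I‖ = 1 := by
  rw [norm_add_mul_I, h, Real.sqrt_one]

lemma sq_add_sqrt_one_sub_sq {b : ℝ} (hb : |b| ≤ 1) : b ^ 2 + √(1 - b ^ 2) ^ 2 = 1 := by
  have : b ^ 2 ≤ 1 := sq_le_one_iff_abs_le_one b |>.mpr hb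
  rw [Real.sq_sqrt (by linarith)]
  ring

lemma norm_eq_one_of_sq_sub_two_mul_add_one_eq_zero {b : ℝ} (hb : |b| ≤ 1) {A : ℂ}
    (hA : A ^ 2 - 2 * (b : ℂ) * A + 1 = 0) : ‖A‖ = 1 := by
  set s := √(1 - b ^ 2)
  have hbs : b ^ 2 + s ^ 2 = 1 := sq_add_sqrt_one_sub_sq hb
  rw [sq_sub_two_mul_add_one_eq_mul hbs, mul_eq_zero, sub_eq_zero, sub_eq_zero] at hA
  rcases hA with rfl | rfl
  · exact norm_add_mul_I_eq_one hbs
  · rw [sub_eq_add_neg, ← neg_mul, ← ofReal_neg]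
    exact norm_add_mul_I_eq_one (by rwa [neg_sq])

lemma exists_ne_of_sq_sub_two_mul_add_one_eq_zero {b : ℝ} (hb : |b| < 1) :
    ∃ A₁ A₂ : ℂ, A₁ ≠ A₂ ∧
      A₁ ^ 2 - 2 * (b : ℂ) * A₁ + 1 = 0 ∧ A₂ ^ 2 - 2 * (b : ℂ) * A₂ + 1 = 0 := by
  set s := √(1 - b ^ 2)
  have hbs : b ^ 2 + s ^ 2 = 1 := sq_add_sqrt_one_sub_sq hb.le
  have hs : s ≠ 0 := (Real.sqrt_pos.mpr (by nlinarith [sq_lt_one_iff_abs_lt_one b |>.mpr hb])).ne'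
  refine ⟨b + s * I, b - s * I, ?_, ?_, ?_⟩ <;>
    simp only [ne_eq, sq_sub_two_mul_add_one_eq_mul hbs, sub_self, zero_mul, mul_zero]
  intro h
  have : (2 * s : ℂ) * I = 0 := by linear_combination h
  simp [hs, I_ne_zero] at this

lemma lt_two_mul_sqrt_div_mono {m M L Δt : ℝ} (hmM : m ≤ M) (hL : 0 ≤ L)
    (h : Δt < 2 * √(m / L)) : Δt < 2 * √(M / L) :=
  h.trans_le <| by gcongr

lemma abs_one_sub_sq_mul_div_lt_one {M L Δt : ℝ} (hM : 0 < M) (hL : 0 < L) (hΔt : 0 < Δt)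
    (h : Δt < 2 * √(M / L)) : |1 - Δt ^ 2 * L / (2 * M)| < 1 := by
  have hsq : (Δt / 2) ^ 2 < M / L := (Real.lt_sqrt (by positivity)).mp (by linarith)
  have hlt : Δt ^ 2 * L < 4 * M := by
    rw [lt_div_iff₀ hL] at hsq
    linarith
  have hpos : 0 < Δt ^ 2 * L / (2 * M) := by positivity
  have hlt_two : Δt ^ 2 * L / (2 * M) < 2 := by
    rw [div_lt_iff₀ (by positivity)]
    linarith
  rw [abs_lt]
  constructor <;> linarith

/-- A time step stable for the leap-frog scheme for the beam alone
(`Δt < 2√(m/L)`) is also stable for the AMP scheme: then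
`Δt < 2√((m + Mₐ⁻ + Mₐ⁺)/L)`, every root of the AMP amplification polynomial
has modulus one, and the two roots are distinct. -/
theorem leapfrog_step_stable_for_amp (m L Mam Map Δt : ℝ) (hm : 0 < m)
    (hL : 0 < L) (hMam : 0 ≤ Mam) (hMap : 0 ≤ Map) (hΔt : 0 < Δt)
    (hstab : Δt < 2 * Real.sqrt (m / L)) :
    Δt < 2 * Real.sqrt ((m + Mam + Map) / L) ∧
    (∀ A : ℂ,
        A ^ 2 - 2 * ((1 - Δt ^ 2 * L / (2 * (m + Mam + Map)) : ℝ) : ℂ) * A + 1 = 0 →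
        ‖A‖ = 1) ∧
    ∃ A₁ A₂ : ℂ, A₁ ≠ A₂ ∧
      A₁ ^ 2 - 2 * ((1 - Δt ^ 2 * L / (2 * (m + Mam + Map)) : ℝ) : ℂ) * A₁ + 1 = 0 ∧
      A₂ ^ 2 - 2 * ((1 - Δt ^ 2 * L / (2 * (m + Mam + Map)) : ℝ) : ℂ) * A₂ + 1 = 0 := by
  have hstab' : Δt < 2 * √((m + Mam + Map) / L) :=
    lt_two_mul_sqrt_div_mono (by linarith) hL.le hstab
  have hb := abs_one_sub_sq_mul_div_lt_one (by positivity) hL hΔt hstab'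
  exact ⟨hstab', fun _ hA ↦ norm_eq_one_of_sq_sub_two_mul_add_one_eq_zero hb.le hA,
    exists_ne_of_sq_sub_two_mul_add_one_eq_zero hb⟩
end
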